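/- Parametrised miniaturised Maclagan theorem (MM_f): let K be a field and f : ℕ → ℕ nondecreasing. For all d, l ∈ ℕ there exists M ∈ ℕ such that for every sequence I_0, …, I_M of monomial ideals in K[X_d, …, X_0, Y] with deg(I_i) ≤ l + f(i) for all i ≤ M, there exist i < j ≤ M with I_i ⊇ I_j. -/

import Mathlib

/-!
Monomial ideals correspond to upper sets of exponent vectors, and Maclagan's theorem says these
are well-quasi-ordered by reverse inclusion. This goes by induction on the number of variables: an
upper set of `ℕ × β` is an antitone sequence of upper sets of `β` (its slices), and antitone
sequences in a well-quasi-order are again well-quasi-ordered, by Higman's lemma. Since only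
finitely many monomial ideals are generated in a given degree, a compactness argument turns this
infinite statement into the bounded one.
-/

/-- `I` is a monomial ideal generated by monomials of total degree at most `deg`. -/
def MonGen {K : Type*} [Field K] {n : ℕ} (I : Ideal (MvPolynomial (Fin n) K)) (deg : ℕ) : Prop :=
  ∃ S : Set (Fin n →₀ ℕ), (∀ s ∈ S, (s.sum fun _ e => e) ≤ deg) ∧
    I = Ideal.span ((fun s => (MvPolynomial.monomial s (1 : K))) '' S)

open Set

section WellQuasiOrder

variable {α β : Type*}

theorem wellQuasiOrderedLE_of_map_le_map [LE α] [LE β] [WellQuasiOrderedLE β] (f : α → β)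
    (hf : ∀ a b, f a ≤ f b → a ≤ b) : WellQuasiOrderedLE α :=
  ⟨fun x ↦ let ⟨i, j, hij, h⟩ := wellQuasiOrdered_le (f ∘ x); ⟨i, j, hij, hf _ _ h⟩⟩

theorem wellQuasiOrdered_sublistForall₂ [Preorder α] [WellQuasiOrderedLE α] :
    WellQuasiOrdered (List.SublistForall₂ (α := α) (· ≤ ·)) := fun _ ↦
  ((isPWO_of_wellQuasiOrderedLE univ).partiallyWellOrderedOn_sublistForall₂ (· ≤ ·)).exists_lt
    fun _ _ _ ↦ mem_univ _

theorem List.SublistForall₂.exists_le_getElem {r : α → α → Prop} {l₁ l₂ : List α}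
    (h : List.SublistForall₂ r l₁ l₂) {k : ℕ} (hk : k < l₁.length) :
    ∃ k', k ≤ k' ∧ ∃ hk' : k' < l₂.length, r l₁[k] l₂[k'] := by
  obtain ⟨l, hl, hsub⟩ := List.sublistForall₂_iff.1 h
  obtain ⟨e, he⟩ := List.sublist_iff_exists_orderEmbedding_getElem?_eq.1 hsub
  have hkl : k < l.length := hl.length_eq ▸ hk
  obtain ⟨hk', hget⟩ :=
    List.getElem?_eq_some_iff.1 ((he k).symm.trans (List.getElem?_eq_getElem hkl))
  exact ⟨e k, e.strictMono.id_le k, hk', hget ▸ hl.get hk hkl⟩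

/-- An antitone sequence stabilises at some `N`, so it is encoded by its limit together with the
word of its first `N` values, and Higman's lemma applies to the words. -/
theorem wellQuasiOrderedLE_antitone [PartialOrder α] [WellQuasiOrderedLE α] :
    WellQuasiOrderedLE {a : ℕ → α // Antitone a} := by
  refine ⟨fun x ↦ ?_⟩
  choose N hN using fun m ↦ WellFoundedLT.antitone_chain_condition (x m).2
  have hlim : ∀ m t, (x m).1 (N m) ≤ (x m).1 t := fun m t ↦
    hN m (max t (N m)) (le_max_right _ _) ▸ (x m).2 (le_max_left _ _)
  obtain ⟨i, j, hij, hfst, hsnd⟩ := (wellQuasiOrdered_le.prod wellQuasiOrdered_sublistForall₂)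
    fun m ↦ ((x m).1 (N m), List.ofFn fun k : Fin (N m) ↦ (x m).1 k)
  refine ⟨i, j, hij, fun t ↦ ?_⟩
  rcases lt_or_ge t (N i) with ht | ht
  · obtain ⟨t', htt', ht', hle⟩ := hsnd.exists_le_getElem (k := t) (by simpa using ht)
    simp only [List.getElem_ofFn] at hle
    exact hle.trans ((x j).2 htt')
  · exact (hN i t ht).symm ▸ hfst.trans (hlim j t)

namespace UpperSet

variable [Preorder α] [Preorder β]

def slice (U : UpperSet (α × β)) (a : α) : UpperSet β :=
  ⟨Prod.mk a ⁻¹' U, U.upper.preimage fun _ _ h ↦ Prod.mk_le_mk.2 ⟨le_rfl, h⟩⟩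

theorem antitone_slice (U : UpperSet (α × β)) : Antitone U.slice :=
  fun _ _ h _ hx ↦ U.upper (Prod.mk_le_mk.2 ⟨h, le_rfl⟩) hx

theorem le_of_forall_slice_le {U V : UpperSet (α × β)} (h : ∀ a, U.slice a ≤ V.slice a) :
    U ≤ V :=
  fun p hp ↦ h p.1 (show p.2 ∈ V.slice p.1 from hp)

theorem wellQuasiOrderedLE_nat_prod [WellQuasiOrderedLE (UpperSet β)] :
    WellQuasiOrderedLE (UpperSet (ℕ × β)) :=
  have := wellQuasiOrderedLE_antitone (α := UpperSet β)
  wellQuasiOrderedLE_of_map_le_map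
    (fun U ↦ (⟨U.slice, U.antitone_slice⟩ : {a : ℕ → UpperSet β // Antitone a}))
    fun _ _ h ↦ le_of_forall_slice_le h

theorem wellQuasiOrderedLE_fin_nat : ∀ n, WellQuasiOrderedLE (UpperSet (Fin n → ℕ))
  | 0 => Finite.to_wellQuasiOrderedLE
  | n + 1 =>
    have := wellQuasiOrderedLE_fin_nat n
    (map (Fin.consOrderIso fun _ ↦ ℕ)).wellQuasiOrderedLE_iff.1 wellQuasiOrderedLE_nat_prod

/-- **Maclagan's theorem** in exponent form: the monomial ideals in `n` variables are
well-quasi-ordered by reverse inclusion. -/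
theorem wellQuasiOrderedLE_finsupp (n : ℕ) : WellQuasiOrderedLE (UpperSet (Fin n →₀ ℕ)) :=
  have := wellQuasiOrderedLE_fin_nat n
  (map Finsupp.orderIsoFunOnFinite).wellQuasiOrderedLE_iff.2 this

end UpperSet

end WellQuasiOrder

namespace MvPolynomial

variable {σ R : Type*} [CommSemiring R]

theorem span_monomial_image_le {S T : Set (σ →₀ ℕ)} (h : ∀ t ∈ T, ∃ s ∈ S, s ≤ t) :
    Ideal.span ((fun s ↦ monomial s (1 : R)) '' T) ≤
      Ideal.span ((fun s ↦ monomial s (1 : R)) '' S) := by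
  rw [Ideal.span_le]
  rintro _ ⟨t, ht, rfl⟩
  obtain ⟨s, hs, hst⟩ := h t ht
  exact Ideal.mem_of_dvd _ (monomial_dvd_monomial.2 ⟨Or.inr hst, one_dvd _⟩)
    (Ideal.subset_span ⟨s, hs, rfl⟩)

theorem exists_lt_span_monomial_image_le {n : ℕ} (S : ℕ → Set (Fin n →₀ ℕ)) :
    ∃ i j, i < j ∧ Ideal.span ((fun s ↦ monomial s (1 : R)) '' S j) ≤
      Ideal.span ((fun s ↦ monomial s (1 : R)) '' S i) := by
  obtain ⟨i, j, hij, hle⟩ :=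
    (UpperSet.wellQuasiOrderedLE_finsupp n).wqo fun m ↦ upperClosure (S m)
  exact ⟨i, j, hij, span_monomial_image_le fun t ht ↦
    mem_upperClosure.1 (hle (subset_upperClosure ht))⟩

end MvPolynomial

theorem finite_setOf_monGen (K : Type*) [Field K] (n D : ℕ) :
    {I : Ideal (MvPolynomial (Fin n) K) | MonGen I D}.Finite := by
  refine (((Finsupp.finite_of_degree_le D).finite_subsets).image
    fun S ↦ Ideal.span ((fun s ↦ MvPolynomial.monomial s (1 : K)) '' S)).subset ?_
  rintro I ⟨S, hS, rfl⟩
  exact ⟨S, hS, rfl⟩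

theorem exists_bound_of_forall_exists_lt {α : Type*} (S : ℕ → Set α) (hS : ∀ n, (S n).Finite)
    (r : α → α → Prop) (h : ∀ x : ℕ → α, (∀ n, x n ∈ S n) → ∃ i j, i < j ∧ r (x i) (x j)) :
    ∃ M, ∀ x : ℕ → α, (∀ n ≤ M, x n ∈ S n) → ∃ i j, i < j ∧ j ≤ M ∧ r (x i) (x j) := by
  by_contra! hbad
  -- Tychonoff: for discrete `α`, the sequences through the `S n` without a good pair up to `M`
  -- form a decreasing sequence of nonempty closed subsets of the compact space `univ.pi S`.
  let _ : TopologicalSpace α := ⊥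
  have : DiscreteTopology α := ⟨rfl⟩
  let bad (M : ℕ) : Set (ℕ → α) := univ.pi S ∩ {x | ∀ i j, i < j → j ≤ M → ¬ r (x i) (x j)}
  have hclosed : ∀ M, IsClosed (bad M) := fun M ↦ by
    refine (isClosed_set_pi fun n _ ↦ isClosed_discrete (S n)).inter ?_
    simp only [ofPred_forall]
    refine isClosed_iInter fun i ↦ isClosed_iInter fun j ↦ isClosed_iInter fun _ ↦
      isClosed_iInter fun _ ↦ ?_
    exact IsClosed.preimage (f := fun x : ℕ → α ↦ (x i, x j))
      ((continuous_apply i).prodMk (continuous_apply j)) (isClosed_discrete {p | ¬ r p.1 p.2})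
  have hcompact : IsCompact (bad 0) :=
    (isCompact_univ_pi fun n ↦ (hS n).isCompact).of_isClosed_subset (hclosed 0) inter_subset_left
  have hne : ∀ n, (S n).Nonempty := fun n ↦
    let ⟨x, hx, _⟩ := hbad n
    ⟨x n, hx n le_rfl⟩
  have hbad_ne : ∀ M, (bad M).Nonempty := fun M ↦ by
    obtain ⟨x, hx, hxbad⟩ := hbad M
    refine ⟨fun n ↦ if n ≤ M then x n else (hne n).some, fun n _ ↦ ?_, fun i j hij hj ↦ ?_⟩
    · dsimp only
      split_ifs with hn
      exacts [hx n hn, (hne n).some_mem]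
    · simpa only [if_pos (hij.le.trans hj), if_pos hj] using hxbad i j hij hj
  obtain ⟨x, hx⟩ := IsCompact.nonempty_iInter_of_sequence_nonempty_isCompact_isClosed bad
    (fun M x hx ↦ ⟨hx.1, fun i j hij hj ↦ hx.2 i j hij (hj.trans M.le_succ)⟩)
    hbad_ne hcompact hclosed
  obtain ⟨i, j, hij, hr⟩ := h x fun n ↦ (mem_iInter.1 hx 0).1 n (mem_univ n)
  exact (mem_iInter.1 hx j).2 i j hij le_rfl hr

theorem miniaturisedMaclagan_param_general (K : Type*) [Field K] (f : ℕ → ℕ)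
    (d l : ℕ) :
    ∃ M : ℕ, ∀ I : ℕ → Ideal (MvPolynomial (Fin (d + 2)) K),
      (∀ i ≤ M, MonGen (I i) (l + f i)) →
      ∃ i j, i < j ∧ j ≤ M ∧ I j ≤ I i :=
  exists_bound_of_forall_exists_lt (fun i ↦ {J | MonGen J (l + f i)})
    (fun i ↦ finite_setOf_monGen K _ _) (fun I J ↦ J ≤ I) fun I hI ↦ by
      choose S _ hS using hI
      obtain ⟨i, j, hij, hle⟩ := MvPolynomial.exists_lt_span_monomial_image_le (R := K) S
      exact ⟨i, j, hij, hS i ▸ hS j ▸ hle⟩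

/-- Parametrised miniaturised Maclagan theorem (MM_f): for nondecreasing `f` and all
`d, l` there is `M` such that every sequence `I_0, …, I_M` of monomial ideals in
`K[X_d, …, X_0, Y]` with `deg (I i) ≤ l + f i` admits `i < j ≤ M` with `I i ⊇ I j`. -/
theorem miniaturisedMaclagan_param (K : Type*) [Field K] (f : ℕ → ℕ) (hf : Monotone f)
    (d l : ℕ) :
    ∃ M : ℕ, ∀ I : ℕ → Ideal (MvPolynomial (Fin (d + 2)) K),
      (∀ i ≤ M, MonGen (I i) (l + f i)) →
      ∃ i j, i < j ∧ j ≤ M ∧ I j ≤ I i :=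
  miniaturisedMaclagan_param_general K f d l
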